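/- The Cherednik operator D_k is triangular on monomials and satisfies D_k E(n,k) = (n + ρ(k)) E(n,k) for n > 0 and D_k E(n,k) = (n - ρ(k)) E(n,k) for n ≤ 0, where ρ(k) = (k_1 + 2k_2)/2; in particular, D_k z^n = (n+ρ(k)) z^n + (lower order terms) for n > 0 and D_k z^n = (n-ρ(k)) z^n + (lower order) for n ≤ 0. -/

import Mathlib

/-
On `z ^ n` the operator acts as `(n - ρ) z^n + k₁ q₁ + 2 k₂ q₂`, where
`q_d = (z^n - z^{-n}) / (1 - z^{-d})` is, for `d ∣ 2n`, the finite geometric sum of the `z^m` with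
`m` running from `d - n` to `n` in steps of `d` (and minus the sum from `d + n` to `-n` when
`n ≤ 0`). For `n > 0` the top terms `z^n` of `q₁, q₂` raise the eigenvalue by `k₁ + 2k₂ = 2ρ` and the
remaining exponents lie in `(-n, n)`; for `n ≤ 0` all exponents lie in `(n, -n]`. In both cases they
precede `n` in the order `0, 1, -1, 2, -2, …`.
-/

open Polynomial

/-- The Cherednik operator of type `BC₁`:
`D_k = z∂z + k₁(1-z⁻¹)⁻¹(1-s) + 2k₂(1-z⁻²)⁻¹(1-s) - ρ(k)`, with `ρ(k) = (k₁+2k₂)/2`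
and `(s f)(z) = f(z⁻¹)`. -/
noncomputable def cherednik (k1 k2 : ℂ) (f : ℂ → ℂ) : ℂ → ℂ := fun z =>
  z * deriv f z + k1 * ((f z - f z⁻¹) / (1 - z⁻¹))
    + 2 * k2 * ((f z - f z⁻¹) / (1 - (z⁻¹) ^ 2)) - (k1 + 2 * k2) / 2 * f z

/-- The position of the monomial `z^m` in the ordered basis `(1, z, z⁻¹, z², z⁻², …)`. -/
def ord (m : ℤ) : ℕ := if 0 < m then 2 * m.toNat - 1 else 2 * (-m).toNat

open Finset Finsupp

lemma ord_lt_ord_of_pos {m n : ℤ} (hn : 0 < n) (hlo : -n < m) (hhi : m < n) :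
    ord m < ord n := by
  unfold ord; split_ifs <;> omega

lemma ord_lt_ord_of_nonpos {m n : ℤ} (hn : n ≤ 0) (hlo : n < m) (hhi : m ≤ -n) :
    ord m < ord n := by
  unfold ord; split_ifs <;> omega

section Laurent

variable {K : Type*} [Field K]

noncomputable def laurentEval (z : K) : (ℤ →₀ K) →ₗ[K] K :=
  linearCombination K (fun m : ℤ => z ^ m)

lemma laurentEval_apply (z : K) (c : ℤ →₀ K) :
    laurentEval z c = c.sum (fun m a => a * z ^ m) := by
  simp only [laurentEval, linearCombination_apply, smul_eq_mul]

lemma laurentEval_sum_single_one (z : K) {ι : Type*} (s : Finset ι) (e : ι → ℤ) :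
    laurentEval z (∑ i ∈ s, single (e i) 1) = ∑ i ∈ s, z ^ e i := by
  simp only [laurentEval, map_sum, linearCombination_single, one_smul]

lemma sum_single_one_mem_supported {ι : Type*} {s : Finset ι} {e : ι → ℤ} {S : Set ℤ}
    (h : ∀ i ∈ s, e i ∈ S) : ∑ i ∈ s, single (e i) (1 : K) ∈ supported K K S :=
  Submodule.sum_mem _ fun i hi => single_mem_supported K 1 (h i hi)

lemma zpow_sub_zpow_neg_div_eq_sum {z : K} (hz : z ≠ 0) {d M : ℕ} (hd : z ^ d ≠ 1) {n : ℤ}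
    (h : (d : ℤ) * M = 2 * n) :
    (z ^ n - z ^ (-n)) / (1 - z⁻¹ ^ d) = ∑ i ∈ range M, z ^ ((d : ℤ) - n + d * i) := by
  have hterm : ∀ i : ℕ, z ^ ((d : ℤ) - n + d * i) = z ^ ((d : ℤ) - n) * (z ^ d) ^ i := by
    intro i
    rw [zpow_add₀ hz, ← pow_mul, ← zpow_natCast]; push_cast; rfl
  have htop : (z ^ d) ^ M = z ^ (2 * n) := by
    rw [← pow_mul, ← zpow_natCast, ← h]; push_cast; rfl
  rw [sum_congr rfl fun i _ => hterm i, ← Finset.mul_sum, geom_sum_eq hd, htop]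
  have hd' : z ^ d - 1 ≠ 0 := sub_ne_zero.mpr hd
  rw [zpow_sub₀ hz, zpow_neg, zpow_natCast, two_mul, zpow_add₀ hz, inv_pow]
  field_simp

lemma exists_zpow_sub_zpow_neg_div_eq {d : ℕ} (hd : 0 < d) {n : ℤ} (hdn : (d : ℤ) ∣ 2 * n) :
    ∃ c ∈ supported K K {m | ord m < ord n}, ∀ z : K, z ≠ 0 → z ^ d ≠ 1 →
      (z ^ n - z ^ (-n)) / (1 - z⁻¹ ^ d) = (if 0 < n then z ^ n else 0) + laurentEval z c := by
  obtain ⟨M, hM⟩ := hdn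
  rcases lt_or_ge 0 n with hn | hn
  · have hM0 : 0 < M := by nlinarith
    obtain ⟨M, rfl⟩ : ∃ M' : ℕ, M = (M' + 1 : ℕ) := ⟨M.toNat - 1, by omega⟩
    refine ⟨∑ i ∈ range M, single ((d : ℤ) - n + d * i) 1,
      sum_single_one_mem_supported fun i hi => ord_lt_ord_of_pos hn ?_ ?_, fun z hz hzd => ?_⟩
    · have := mem_range.mp hi; push_cast at hM; nlinarith
    · have := mem_range.mp hi; push_cast at hM; nlinarith
    rw [zpow_sub_zpow_neg_div_eq_sum hz hzd hM.symm, sum_range_succ, if_pos hn,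
      laurentEval_sum_single_one, add_comm]
    congr 2
    push_cast at hM; linarith
  · have hM0 : M ≤ 0 := by nlinarith
    obtain ⟨M, rfl⟩ : ∃ M' : ℕ, M = -(M' : ℤ) := ⟨(-M).toNat, by omega⟩
    refine ⟨-∑ i ∈ range M, single ((d : ℤ) + n + d * i) 1,
      Submodule.neg_mem _ (sum_single_one_mem_supported fun i hi => ord_lt_ord_of_nonpos hn ?_ ?_),
      fun z hz hzd => ?_⟩
    · have := mem_range.mp hi; nlinarith
    · have := mem_range.mp hi; nlinarith
    have hsum := zpow_sub_zpow_neg_div_eq_sum hz hzd (n := -n) (by linarith)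
    simp only [neg_neg, sub_neg_eq_add] at hsum
    rw [if_neg hn.not_gt, zero_add, map_neg, laurentEval_sum_single_one, ← neg_sub, neg_div, hsum]

end Laurent

lemma cherednik_zpow (k1 k2 : ℂ) (n : ℤ) {z : ℂ} (hz : z ≠ 0) :
    cherednik k1 k2 (fun w => w ^ n) z =
      (n - (k1 + 2 * k2) / 2) * z ^ n + k1 * ((z ^ n - z ^ (-n)) / (1 - z⁻¹ ^ 1))
        + 2 * k2 * ((z ^ n - z ^ (-n)) / (1 - z⁻¹ ^ 2)) := by
  simp only [cherednik, deriv_zpow, inv_zpow', zpow_sub_one₀ hz, pow_one]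
  field_simp
  ring

/-- Triangularity of the Cherednik operator on monomials:
`D_k z^n = (n + ρ(k)) z^n + (lower order)` for `n > 0` and
`D_k z^n = (n - ρ(k)) z^n + (lower order)` for `n ≤ 0`, where lower order means a linear
combination of monomials `z^m` preceding `z^n` in the ordering `1 < z < z⁻¹ < z² < ⋯`. -/
theorem stmt8 (k1 k2 : ℂ) (n : ℤ) :
    ∃ c : ℤ →₀ ℂ, (∀ m : ℤ, c m ≠ 0 → ord m < ord n) ∧
      ∀ z : ℂ, z ≠ 0 → z ^ 2 ≠ 1 →
        cherednik k1 k2 (fun w => w ^ n) z =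
          (if 0 < n then (n : ℂ) + (k1 + 2 * k2) / 2 else (n : ℂ) - (k1 + 2 * k2) / 2) * z ^ n
            + c.sum (fun m a => a * z ^ m) := by
  obtain ⟨a, ha, hA⟩ := exists_zpow_sub_zpow_neg_div_eq (K := ℂ) one_pos (one_dvd (2 * n))
  obtain ⟨b, hb, hB⟩ := exists_zpow_sub_zpow_neg_div_eq (K := ℂ) two_pos (dvd_mul_right 2 n)
  have hc : k1 • a + (2 * k2) • b ∈ supported ℂ ℂ {m | ord m < ord n} :=
    add_mem (Submodule.smul_mem _ _ ha) (Submodule.smul_mem _ _ hb)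
  refine ⟨k1 • a + (2 * k2) • b, fun m hm => (mem_supported ℂ _).mp hc (mem_support_iff.mpr hm),
    fun z hz hz2 => ?_⟩
  have hz1 : z ^ 1 ≠ 1 := fun h => hz2 (by rw [pow_one] at h; rw [h, one_pow])
  rw [cherednik_zpow k1 k2 n hz, hA z hz hz1, hB z hz hz2, ← laurentEval_apply, map_add,
    map_smul, map_smul, smul_eq_mul, smul_eq_mul]
  split_ifs <;> ring
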